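/- There exists a constant C > 0, depending only on w_- and w_+, such that for all t > 0, δ > 0 and p ∈ [1, ∞]: ‖∂²_x w^r_δ(·,t)‖_{L^p(ℝ)} ≤ C (δ + t)^{−1} δ^{−1 + 1/p}. -/

import Mathlib

open MeasureTheory Set Filter
open scoped ENNReal Topology

/-!
Along characteristics the solution is `u = w_δ ∘ X`, where `X` inverts the characteristic map
`y ↦ y + w_δ y * t`. Since `w_δ' ≥ 0` this map is a strictly increasing diffeomorphism, and
differentiating its inverse twice gives `u_xx = w_δ'' (X x) / (1 + w_δ' (X x) * t) ^ 3`.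
With `w_δ' = κ / δ`, `0 ≤ κ ≤ a = (w₊ - w₋) / 2`, this yields
`|u_xx| ≤ 2κ / (δ (δ + κ t)) ≤ (2a + 2) / (δ (δ + t))`.
On the other hand `u_x ≥ 0` increases up to the centre of the fan, decreases after it and
vanishes at `±∞`, so `‖u_xx‖_{L¹} = 2 max u_x = 2a / (δ + a t) ≤ (2a + 2) / (δ + t)`.
The interpolation `‖f‖_p ≤ ‖f‖_∞ ^ (1 - 1/p) ‖f‖_1 ^ (1/p)` combines the two bounds.
-/

section Interpolation

variable {α E : Type*} [MeasurableSpace α] {μ : Measure α} [NormedAddCommGroup E]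

theorem eLpNorm_le_eLpNorm_top_rpow_mul_eLpNorm_one_rpow {f : α → E}
    (hf : AEStronglyMeasurable f μ) {p : ℝ≥0∞} (hp : 1 ≤ p) :
    eLpNorm f p μ ≤ eLpNorm f ∞ μ ^ (1 - p.toReal⁻¹) * eLpNorm f 1 μ ^ p.toReal⁻¹ := by
  -- for `p = ∞` the exponents are `1` and `(∞).toReal⁻¹ = 0`
  rcases eq_or_ne p ∞ with rfl | hp_top
  · simp
  have hq : 1 ≤ p.toReal := by simpa using ENNReal.toReal_mono hp_top hp
  rw [eLpNorm_eq_lintegral_rpow_enorm_toReal (one_pos.trans_le hp).ne' hp_top,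
    eLpNorm_exponent_top, eLpNorm_one_eq_lintegral_enorm, one_div]
  have hpt : ∀ᵐ x ∂μ, ‖f x‖ₑ ^ p.toReal ≤ eLpNormEssSup f μ ^ (p.toReal - 1) * ‖f x‖ₑ := by
    filter_upwards [enorm_ae_le_eLpNormEssSup f μ] with x hx
    calc ‖f x‖ₑ ^ p.toReal = ‖f x‖ₑ ^ (p.toReal - 1 + 1) := by ring_nf
      _ = ‖f x‖ₑ ^ (p.toReal - 1) * ‖f x‖ₑ := by
          rw [ENNReal.rpow_add_of_nonneg _ _ (by linarith) zero_le_one, ENNReal.rpow_one]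
      _ ≤ _ := by gcongr
  calc (∫⁻ x, ‖f x‖ₑ ^ p.toReal ∂μ) ^ p.toReal⁻¹
      ≤ (eLpNormEssSup f μ ^ (p.toReal - 1) * ∫⁻ x, ‖f x‖ₑ ∂μ) ^ p.toReal⁻¹ := by
        gcongr
        exact (lintegral_mono_ae hpt).trans_eq (lintegral_const_mul'' _ hf.enorm)
    _ = _ := by
        rw [ENNReal.mul_rpow_of_nonneg _ _ (by positivity), ← ENNReal.rpow_mul]
        congr 2
        field_simp

theorem eLpNorm_le_ofReal_of_bound_of_lintegral_le {f : α → E} (hf : AEStronglyMeasurable f μ)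
    {M B : ℝ} (hM₀ : 0 ≤ M) (hB₀ : 0 ≤ B) (hM : ∀ᵐ x ∂μ, ‖f x‖ ≤ M)
    (hB : ∫⁻ x, ‖f x‖ₑ ∂μ ≤ ENNReal.ofReal B) {p : ℝ≥0∞} (hp : 1 ≤ p) :
    eLpNorm f p μ ≤ ENNReal.ofReal (M ^ (1 - p.toReal⁻¹) * B ^ p.toReal⁻¹) := by
  have hq : p.toReal⁻¹ ≤ 1 := by
    rcases eq_or_ne p ∞ with rfl | hp_top
    · simp
    · exact inv_le_one_of_one_le₀ (by simpa using ENNReal.toReal_mono hp_top hp)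
  refine (eLpNorm_le_eLpNorm_top_rpow_mul_eLpNorm_one_rpow hf hp).trans ?_
  rw [ENNReal.ofReal_mul (by positivity), ← ENNReal.ofReal_rpow_of_nonneg hM₀ (by linarith),
    ← ENNReal.ofReal_rpow_of_nonneg hB₀ (by positivity)]
  gcongr
  · rw [eLpNorm_exponent_top]
    exact eLpNormEssSup_le_of_ae_bound hM
  · rwa [eLpNorm_one_eq_lintegral_enorm]

end Interpolation

section TotalVariation

variable {g g' : ℝ → ℝ} {c : ℝ}

theorem lintegral_Ioi_enorm_deriv_of_nonpos (hderiv : ∀ x ∈ Ici c, HasDerivAt g (g' x) x)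
    (hg' : ∀ x ∈ Ioi c, g' x ≤ 0) (htop : Tendsto g atTop (𝓝 0)) :
    ∫⁻ x in Ioi c, ‖g' x‖ₑ = ENNReal.ofReal (g c) := by
  have hneg : ∀ x ∈ Ioi c, 0 ≤ -g' x := fun x hx => neg_nonneg.2 (hg' x hx)
  have hint : IntegrableOn (fun x => -g' x) (Ioi c) :=
    (integrableOn_Ioi_deriv_of_nonpos' hderiv hg' htop).neg
  calc ∫⁻ x in Ioi c, ‖g' x‖ₑ = ∫⁻ x in Ioi c, ENNReal.ofReal (-g' x) := by
        refine setLIntegral_congr_fun measurableSet_Ioi fun x hx => ?_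
        rw [← enorm_neg, Real.enorm_eq_ofReal (hneg x hx)]
    _ = ENNReal.ofReal (∫ x in Ioi c, -g' x) :=
        (ofReal_integral_eq_lintegral_ofReal hint
          ((ae_restrict_iff' measurableSet_Ioi).2 (.of_forall hneg))).symm
    _ = ENNReal.ofReal (g c) := by
        rw [integral_neg, integral_Ioi_of_hasDerivAt_of_nonpos' hderiv hg' htop, zero_sub, neg_neg]

theorem lintegral_Iio_enorm_deriv_of_nonneg (hderiv : ∀ x ∈ Iic c, HasDerivAt g (g' x) x)
    (hg' : ∀ x ∈ Iio c, 0 ≤ g' x) (hbot : Tendsto g atBot (𝓝 0)) :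
    ∫⁻ x in Iio c, ‖g' x‖ₑ = ENNReal.ofReal (g c) := by
  have hderiv_refl : ∀ x ∈ Ici (-c), HasDerivAt (fun x => g (-x)) (-g' (-x)) x := fun x hx => by
    simpa [Function.comp_def] using
      (hderiv (-x) (show -x ≤ c from neg_le.1 hx)).comp x (hasDerivAt_neg x)
  have hrefl := lintegral_Ioi_enorm_deriv_of_nonpos hderiv_refl
    (fun x hx => neg_nonpos.2 (hg' (-x) (show -x < c from neg_lt.1 hx)))
    (hbot.comp tendsto_neg_atTop_atBot)
  rw [neg_neg] at hrefl
  rw [← hrefl]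
  have := (Measure.measurePreserving_neg (volume : Measure ℝ)).setLIntegral_comp_preimage_emb
    (Homeomorph.neg ℝ).measurableEmbedding (fun x => ‖g' x‖ₑ) (Iio c)
  simpa using this.symm

theorem lintegral_enorm_deriv_of_unimodal (hderiv : ∀ x, HasDerivAt g (g' x) x)
    (hinc : ∀ x < c, 0 ≤ g' x) (hdec : ∀ x > c, g' x ≤ 0)
    (hbot : Tendsto g atBot (𝓝 0)) (htop : Tendsto g atTop (𝓝 0)) :
    ∫⁻ x, ‖g' x‖ₑ = ENNReal.ofReal (2 * g c) := by
  have hc : 0 ≤ g c := by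
    have := integral_Ioi_of_hasDerivAt_of_nonpos' (fun x _ => hderiv x) hdec htop
    linarith [setIntegral_nonpos (μ := volume) measurableSet_Ioi hdec]
  rw [← lintegral_add_compl _ measurableSet_Iio, compl_Iio, ← setLIntegral_congr Ioi_ae_eq_Ici,
    lintegral_Iio_enorm_deriv_of_nonneg (fun x _ => hderiv x) hinc hbot,
    lintegral_Ioi_enorm_deriv_of_nonpos (fun x _ => hderiv x) hdec htop,
    ← ENNReal.ofReal_add hc hc, two_mul]

end TotalVariation

section Characteristics

/- Throughout, `hX : ∀ x, X x + φ (X x) * t = x` says that `X x` is the foot of the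
characteristic of `u_t + u u_x = 0`, `u(·, 0) = φ`, through `(x, t)`. -/

variable {φ φ' φ'' X : ℝ → ℝ} {t : ℝ}

theorem strictMono_add_mul_of_monotone (hφ : Monotone φ) (ht : 0 ≤ t) :
    StrictMono fun y => y + φ y * t :=
  strictMono_id.add_monotone (hφ.mul_const ht)

theorem le_characteristic_iff (hφ : Monotone φ) (ht : 0 ≤ t) (hX : ∀ x, X x + φ (X x) * t = x)
    (y x : ℝ) : y ≤ X x ↔ y + φ y * t ≤ x := by
  conv_rhs => rw [← hX x]
  exact (strictMono_add_mul_of_monotone hφ ht).le_iff_le.symm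

theorem lt_characteristic_iff (hφ : Monotone φ) (ht : 0 ≤ t) (hX : ∀ x, X x + φ (X x) * t = x)
    (y x : ℝ) : y < X x ↔ y + φ y * t < x := by
  conv_rhs => rw [← hX x]
  exact (strictMono_add_mul_of_monotone hφ ht).lt_iff_lt.symm

theorem characteristic_lt_iff (hφ : Monotone φ) (ht : 0 ≤ t) (hX : ∀ x, X x + φ (X x) * t = x)
    (y x : ℝ) : X x < y ↔ x < y + φ y * t := by
  simpa only [not_le] using (le_characteristic_iff hφ ht hX y x).not

theorem characteristic_add_mul (hφ : Monotone φ) (ht : 0 ≤ t) (hX : ∀ x, X x + φ (X x) * t = x)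
    (y : ℝ) : X (y + φ y * t) = y :=
  (strictMono_add_mul_of_monotone hφ ht).injective (hX _)

theorem tendsto_characteristic_atTop (hφ : Monotone φ) (ht : 0 ≤ t)
    (hX : ∀ x, X x + φ (X x) * t = x) : Tendsto X atTop atTop :=
  tendsto_atTop.2 fun y => (eventually_ge_atTop (y + φ y * t)).mono fun _ hx =>
    (le_characteristic_iff hφ ht hX _ _).2 hx

theorem tendsto_characteristic_atBot (hφ : Monotone φ) (ht : 0 ≤ t)
    (hX : ∀ x, X x + φ (X x) * t = x) : Tendsto X atBot atBot :=
  tendsto_atBot.2 fun y => (eventually_lt_atBot (y + φ y * t)).mono fun _ hx =>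
    ((characteristic_lt_iff hφ ht hX _ _).2 hx).le

theorem lipschitzWith_one_of_characteristic (hφ : Monotone φ) (ht : 0 ≤ t)
    (hX : ∀ x, X x + φ (X x) * t = x) : LipschitzWith 1 X := by
  refine LipschitzWith.of_dist_le_mul fun x x' => ?_
  rw [NNReal.coe_one, one_mul, Real.dist_eq, Real.dist_eq]
  have hx := hX x
  have hx' := hX x'
  rcases le_total (X x) (X x') with h | h
  · have := mul_le_mul_of_nonneg_right (hφ h) ht
    rw [abs_of_nonpos (by linarith), abs_of_nonpos (by linarith)]
    linarith
  · have := mul_le_mul_of_nonneg_right (hφ h) ht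
    rw [abs_of_nonneg (by linarith), abs_of_nonneg (by linarith)]
    linarith

theorem hasDerivAt_characteristic (hφ : ∀ y, HasDerivAt φ (φ' y) y) (hφ' : 0 ≤ φ') (ht : 0 ≤ t)
    (hX : ∀ x, X x + φ (X x) * t = x) (x : ℝ) : HasDerivAt X (1 + φ' (X x) * t)⁻¹ x := by
  have hmono := monotone_of_hasDerivAt_nonneg hφ hφ'
  have hF : HasDerivAt (fun y => y + φ y * t) (1 + φ' (X x) * t) (X x) :=
    (hasDerivAt_id _).add ((hφ _).mul_const t)
  have hpos : 0 < 1 + φ' (X x) * t := add_pos_of_pos_of_nonneg one_pos (mul_nonneg (hφ' _) ht)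
  exact hF.of_local_left_inverse
    (lipschitzWith_one_of_characteristic hmono ht hX).continuous.continuousAt hpos.ne'
    (.of_forall hX)

theorem hasDerivAt_comp_characteristic (hφ : ∀ y, HasDerivAt φ (φ' y) y) (hφ' : 0 ≤ φ')
    (ht : 0 ≤ t) (hX : ∀ x, X x + φ (X x) * t = x) (x : ℝ) :
    HasDerivAt (fun x => φ (X x)) (φ' (X x) / (1 + φ' (X x) * t)) x := by
  simpa [div_eq_mul_inv, Function.comp_def] using
    (hφ (X x)).comp x (hasDerivAt_characteristic hφ hφ' ht hX x)

theorem hasDerivAt_deriv_comp_characteristic (hφ : ∀ y, HasDerivAt φ (φ' y) y) (hφ' : 0 ≤ φ')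
    (hφ'' : ∀ y, HasDerivAt φ' (φ'' y) y) (ht : 0 ≤ t) (hX : ∀ x, X x + φ (X x) * t = x)
    (x : ℝ) :
    HasDerivAt (fun x => φ' (X x) / (1 + φ' (X x) * t)) (φ'' (X x) / (1 + φ' (X x) * t) ^ 3) x := by
  have hpos : 0 < 1 + φ' (X x) * t := add_pos_of_pos_of_nonneg one_pos (mul_nonneg (hφ' _) ht)
  have hquot : HasDerivAt (fun y => φ' y / (1 + φ' y * t)) (φ'' (X x) / (1 + φ' (X x) * t) ^ 2)
      (X x) := by
    refine ((hφ'' (X x)).div (((hφ'' (X x)).mul_const t).const_add 1) hpos.ne').congr_deriv ?_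
    field_simp
    ring
  refine (hquot.comp x (hasDerivAt_characteristic hφ hφ' ht hX x)).congr_deriv ?_
  field_simp

theorem iteratedDeriv_two_comp_characteristic (hφ : ∀ y, HasDerivAt φ (φ' y) y) (hφ' : 0 ≤ φ')
    (hφ'' : ∀ y, HasDerivAt φ' (φ'' y) y) (ht : 0 ≤ t) (hX : ∀ x, X x + φ (X x) * t = x)
    (x : ℝ) :
    iteratedDeriv 2 (fun x => φ (X x)) x = φ'' (X x) / (1 + φ' (X x) * t) ^ 3 := by
  rw [iteratedDeriv_succ, iteratedDeriv_one,
    funext fun x => (hasDerivAt_comp_characteristic hφ hφ' ht hX x).deriv,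
    (hasDerivAt_deriv_comp_characteristic hφ hφ' hφ'' ht hX x).deriv]

theorem lintegral_enorm_iteratedDeriv_two_comp_characteristic (hφ : ∀ y, HasDerivAt φ (φ' y) y)
    (hφ' : 0 ≤ φ') (hφ'' : ∀ y, HasDerivAt φ' (φ'' y) y) (ht : 0 ≤ t)
    (hX : ∀ x, X x + φ (X x) * t = x) {y₀ : ℝ} (hinc : ∀ y < y₀, 0 ≤ φ'' y)
    (hdec : ∀ y > y₀, φ'' y ≤ 0) (hbot : Tendsto φ' atBot (𝓝 0)) (htop : Tendsto φ' atTop (𝓝 0)) :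
    ∫⁻ x, ‖iteratedDeriv 2 (fun x => φ (X x)) x‖ₑ =
      ENNReal.ofReal (2 * (φ' y₀ / (1 + φ' y₀ * t))) := by
  have hmono := monotone_of_hasDerivAt_nonneg hφ hφ'
  have hden : ∀ y, 0 < (1 + φ' y * t) ^ 3 := fun y =>
    pow_pos (add_pos_of_pos_of_nonneg one_pos (mul_nonneg (hφ' y) ht)) 3
  have hlim : ∀ {l : Filter ℝ}, Tendsto (fun x => φ' (X x)) l (𝓝 0) →
      Tendsto (fun x => φ' (X x) / (1 + φ' (X x) * t)) l (𝓝 0) := fun h => by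
    have h' := h.div ((h.mul_const t).const_add 1) (by simp)
    rwa [zero_mul, add_zero, zero_div] at h'
  simp_rw [iteratedDeriv_two_comp_characteristic hφ hφ' hφ'' ht hX]
  have := lintegral_enorm_deriv_of_unimodal (c := y₀ + φ y₀ * t)
    (hasDerivAt_deriv_comp_characteristic hφ hφ' hφ'' ht hX)
    (fun x hx => div_nonneg (hinc _ ((characteristic_lt_iff hmono ht hX _ _).2 hx)) (hden _).le)
    (fun x hx => div_nonpos_of_nonpos_of_nonneg
      (hdec _ ((lt_characteristic_iff hmono ht hX _ _).2 hx)) (hden _).le)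
    (hlim (hbot.comp (tendsto_characteristic_atBot hmono ht hX)))
    (hlim (htop.comp (tendsto_characteristic_atTop hmono ht hX)))
  rwa [characteristic_add_mul hmono ht hX] at this

end Characteristics

namespace Real

theorem hasDerivAt_tanh (x : ℝ) : HasDerivAt tanh (1 - tanh x ^ 2) x := by
  have hc := (cosh_pos x).ne'
  have h := (hasDerivAt_sinh x).div (hasDerivAt_cosh x) hc
  rw [show sinh / cosh = tanh from funext fun y => (tanh_eq_sinh_div_cosh y).symm] at h
  refine h.congr_deriv ?_
  rw [tanh_eq_sinh_div_cosh]
  field_simp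

theorem one_sub_tanh_sq (x : ℝ) : 1 - tanh x ^ 2 = (cosh x ^ 2)⁻¹ := by
  have hc := (cosh_pos x).ne'
  rw [tanh_eq_sinh_div_cosh]
  field_simp
  linarith [cosh_sq_sub_sinh_sq x]

theorem tendsto_cosh_atTop : Tendsto cosh atTop atTop := by
  refine tendsto_atTop_mono (fun x => ?_) (tendsto_exp_atTop.atTop_div_const two_pos)
  rw [cosh_eq]
  linarith [exp_pos (-x)]

theorem tendsto_one_sub_tanh_sq_atTop : Tendsto (fun x => 1 - tanh x ^ 2) atTop (𝓝 0) := by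
  simp_rw [one_sub_tanh_sq]
  exact ((tendsto_pow_atTop two_ne_zero).comp tendsto_cosh_atTop).inv_tendsto_atTop

theorem tendsto_one_sub_tanh_sq_atBot : Tendsto (fun x => 1 - tanh x ^ 2) atBot (𝓝 0) := by
  simpa [Function.comp_def] using tendsto_one_sub_tanh_sq_atTop.comp tendsto_neg_atBot_atTop

end Real

open Real

theorem two_mul_div_add_mul_le {κ δ t : ℝ} (hκ : 0 ≤ κ) (hδ : 0 < δ) (ht : 0 ≤ t) :
    2 * κ / (δ + κ * t) ≤ (2 * κ + 2) / (δ + t) := by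
  rw [div_le_div_iff₀ (by positivity) (by positivity)]
  nlinarith [mul_nonneg (mul_nonneg hκ hκ) ht]

theorem div_rpow_one_sub_mul_rpow {B δ : ℝ} (hB : 0 ≤ B) (hδ : 0 < δ) (r : ℝ) :
    (B / δ) ^ (1 - r) * B ^ r = B * δ ^ (-1 + r) := by
  rw [Real.div_rpow hB hδ.le, div_mul_eq_mul_div, ← Real.rpow_add' hB (by simp), sub_add_cancel,
    Real.rpow_one, show -1 + r = -(1 - r) by ring, Real.rpow_neg hδ.le, div_eq_mul_inv]

section TanhProfile

variable {m a δ t : ℝ}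

noncomputable def tanhProfile (m a δ y : ℝ) : ℝ := m + a * tanh (y / δ)

noncomputable def tanhProfileDeriv (a δ y : ℝ) : ℝ := a / δ * (1 - tanh (y / δ) ^ 2)

noncomputable def tanhProfileDeriv2 (a δ y : ℝ) : ℝ :=
  -(2 * a / δ ^ 2) * tanh (y / δ) * (1 - tanh (y / δ) ^ 2)

theorem hasDerivAt_tanhProfile (m a δ y : ℝ) :
    HasDerivAt (tanhProfile m a δ) (tanhProfileDeriv a δ y) y := by
  have h := (((hasDerivAt_tanh (y / δ)).comp y ((hasDerivAt_id y).div_const δ)).const_mul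
    a).const_add m
  refine h.congr_deriv ?_
  rw [tanhProfileDeriv]
  ring

theorem hasDerivAt_tanhProfileDeriv (a δ y : ℝ) :
    HasDerivAt (tanhProfileDeriv a δ) (tanhProfileDeriv2 a δ y) y := by
  have h := ((((hasDerivAt_tanh (y / δ)).comp y ((hasDerivAt_id y).div_const δ)).pow 2).const_sub
    1).const_mul (a / δ)
  refine h.congr_deriv ?_
  simp only [tanhProfileDeriv2, Function.comp_apply, id]
  ring

theorem tanhProfileDeriv_nonneg (ha : 0 ≤ a) (hδ : 0 ≤ δ) : 0 ≤ tanhProfileDeriv a δ :=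
  fun _ => mul_nonneg (div_nonneg ha hδ) (sub_nonneg.2 (tanh_sq_lt_one _).le)

theorem tanhProfileDeriv2_nonneg (ha : 0 ≤ a) (hδ : 0 < δ) {y : ℝ} (hy : y ≤ 0) :
    0 ≤ tanhProfileDeriv2 a δ y := by
  have hT : tanh (y / δ) ≤ 0 := by
    rw [tanh_eq_sinh_div_cosh]
    exact div_nonpos_of_nonpos_of_nonneg
      (sinh_nonpos_iff.2 (div_nonpos_of_nonpos_of_nonneg hy hδ.le)) (cosh_pos _).le
  exact mul_nonneg (mul_nonneg_of_nonpos_of_nonpos (neg_nonpos.2 (by positivity)) hT)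
    (sub_nonneg.2 (tanh_sq_lt_one _).le)

theorem tanhProfileDeriv2_nonpos (ha : 0 ≤ a) (hδ : 0 < δ) {y : ℝ} (hy : 0 ≤ y) :
    tanhProfileDeriv2 a δ y ≤ 0 := by
  have hT : 0 ≤ tanh (y / δ) := by
    rw [tanh_eq_sinh_div_cosh]
    exact div_nonneg (sinh_nonneg_iff.2 (div_nonneg hy hδ.le)) (cosh_pos _).le
  exact mul_nonpos_of_nonpos_of_nonneg
    (mul_nonpos_of_nonpos_of_nonneg (neg_nonpos.2 (by positivity)) hT)
    (sub_nonneg.2 (tanh_sq_lt_one _).le)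

theorem tendsto_tanhProfileDeriv_atTop (a : ℝ) (hδ : 0 < δ) :
    Tendsto (tanhProfileDeriv a δ) atTop (𝓝 0) := by
  unfold tanhProfileDeriv
  simpa using (tendsto_one_sub_tanh_sq_atTop.comp
    (tendsto_id.atTop_div_const hδ)).const_mul (a / δ)

theorem tendsto_tanhProfileDeriv_atBot (a : ℝ) (hδ : 0 < δ) :
    Tendsto (tanhProfileDeriv a δ) atBot (𝓝 0) := by
  unfold tanhProfileDeriv
  simpa using (tendsto_one_sub_tanh_sq_atBot.comp
    (tendsto_id.atBot_div_const hδ)).const_mul (a / δ)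

theorem abs_tanhProfileDeriv2_div_le (ha : 0 ≤ a) (hδ : 0 < δ) (ht : 0 ≤ t) (y : ℝ) :
    |tanhProfileDeriv2 a δ y / (1 + tanhProfileDeriv a δ y * t) ^ 3| ≤
      (2 * a + 2) / (δ + t) / δ := by
  set T := tanh (y / δ)
  have hs : 0 ≤ 1 - T ^ 2 := sub_nonneg.2 (tanh_sq_lt_one _).le
  have hs1 : 1 - T ^ 2 ≤ 1 := by linarith [sq_nonneg T]
  set κ := a * (1 - T ^ 2)
  have hκ : 0 ≤ κ := mul_nonneg ha hs
  have hD : 1 ≤ 1 + κ / δ * t := le_add_of_nonneg_right (by positivity)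
  have hφ' : tanhProfileDeriv a δ y = κ / δ := by simp only [tanhProfileDeriv, κ]; ring
  have hφ'' : tanhProfileDeriv2 a δ y = -(2 * κ / δ ^ 2) * T := by
    simp only [tanhProfileDeriv2, κ]; ring
  have hD3 : 0 < (1 + κ / δ * t) ^ 3 := pow_pos (by linarith) 3
  calc |tanhProfileDeriv2 a δ y / (1 + tanhProfileDeriv a δ y * t) ^ 3|
      = 2 * κ / δ ^ 2 * |T| / (1 + κ / δ * t) ^ 3 := by
        rw [hφ', hφ'', abs_div, abs_of_pos hD3, abs_mul, abs_neg, abs_of_nonneg (by positivity)]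
    _ ≤ 2 * κ / δ ^ 2 * 1 / (1 + κ / δ * t) :=
        div_le_div₀ (by positivity) (by gcongr; exact (abs_tanh_lt_one _).le) (by linarith)
          (le_self_pow₀ hD (by norm_num))
    _ = 2 * κ / (δ + κ * t) / δ := by field_simp
    _ ≤ (2 * κ + 2) / (δ + t) / δ := by gcongr ?_ / δ; exact two_mul_div_add_mul_le hκ hδ ht
    _ ≤ (2 * a + 2) / (δ + t) / δ := by gcongr; exact mul_le_of_le_one_right ha hs1

theorem eLpNorm_iteratedDeriv_two_tanhProfile_comp_le (ha : 0 ≤ a) (hδ : 0 < δ) (ht : 0 ≤ t)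
    {X : ℝ → ℝ} (hX : ∀ x, X x + tanhProfile m a δ (X x) * t = x) {p : ℝ≥0∞} (hp : 1 ≤ p) :
    eLpNorm (fun x => iteratedDeriv 2 (fun z => tanhProfile m a δ (X z)) x) p volume ≤
      ENNReal.ofReal ((2 * a + 2) * (δ + t)⁻¹ * δ ^ (-1 + 1 / p.toReal)) := by
  have hφ := hasDerivAt_tanhProfile m a δ
  have hφ' := tanhProfileDeriv_nonneg ha hδ.le
  have hφ'' := hasDerivAt_tanhProfileDeriv a δ
  have hsup : ∀ x, ‖iteratedDeriv 2 (fun z => tanhProfile m a δ (X z)) x‖ ≤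
      (2 * a + 2) / (δ + t) / δ := fun x => by
    rw [iteratedDeriv_two_comp_characteristic hφ hφ' hφ'' ht hX, Real.norm_eq_abs]
    exact abs_tanhProfileDeriv2_div_le ha hδ ht _
  have hL1 : ∫⁻ x, ‖iteratedDeriv 2 (fun z => tanhProfile m a δ (X z)) x‖ₑ ≤
      ENNReal.ofReal ((2 * a + 2) / (δ + t)) := by
    rw [lintegral_enorm_iteratedDeriv_two_comp_characteristic hφ hφ' hφ'' ht hX (y₀ := 0)
      (fun _ hy => tanhProfileDeriv2_nonneg ha hδ hy.le)
      (fun _ hy => tanhProfileDeriv2_nonpos ha hδ hy.le)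
      (tendsto_tanhProfileDeriv_atBot a hδ) (tendsto_tanhProfileDeriv_atTop a hδ)]
    gcongr
    calc 2 * (tanhProfileDeriv a δ 0 / (1 + tanhProfileDeriv a δ 0 * t))
        = 2 * a / (δ + a * t) := by
          rw [tanhProfileDeriv, zero_div, tanh_zero]
          field_simp
          ring
      _ ≤ (2 * a + 2) / (δ + t) := two_mul_div_add_mul_le ha hδ ht
  have hmeas : AEStronglyMeasurable
      (fun x => iteratedDeriv 2 (fun z => tanhProfile m a δ (X z)) x) volume := by
    rw [iteratedDeriv_succ]
    exact (measurable_deriv _).aestronglyMeasurable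
  calc _ ≤ ENNReal.ofReal (((2 * a + 2) / (δ + t) / δ) ^ (1 - p.toReal⁻¹) *
          ((2 * a + 2) / (δ + t)) ^ p.toReal⁻¹) :=
        eLpNorm_le_ofReal_of_bound_of_lintegral_le hmeas (by positivity) (by positivity)
          (.of_forall hsup) hL1 hp
    _ = _ := by rw [div_rpow_one_sub_mul_rpow (by positivity) hδ, div_eq_mul_inv, one_div]

end TanhProfile

/-- the L^p bound on the second spatial derivative of the Burgers
solution: ‖∂²ₓ w^r_δ(·,t)‖_{L^p} ≤ C (δ+t)^{−1} δ^{−1+1/p} for all t > 0,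
δ > 0 and p ∈ [1,∞], with C depending only on w₋, w₊. -/
theorem burgers_second_derivative_Lp_bound (wm wp : ℝ) (hw : wm < wp) :
    ∃ C > (0 : ℝ), ∀ δ : ℝ, 0 < δ →
      ∀ wδ : ℝ → ℝ,
        (∀ x, wδ x = (wp + wm) / 2 + (wp - wm) / 2 * Real.tanh (x / δ)) →
      ∀ x₀ : ℝ → ℝ → ℝ,
        (∀ x t : ℝ, 0 ≤ t → x₀ x t + wδ (x₀ x t) * t = x) →
      ∀ w : ℝ → ℝ → ℝ,
        (∀ x t : ℝ, 0 ≤ t → w x t = wδ (x₀ x t)) →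
      ∀ t : ℝ, 0 < t → ∀ p : ℝ≥0∞, 1 ≤ p →
        eLpNorm (fun x => iteratedDeriv 2 (fun z => w z t) x) p volume
          ≤ ENNReal.ofReal
              (C * (δ + t)⁻¹ * δ ^ (-1 + 1 / p.toReal)) := by
  refine ⟨wp - wm + 2, by linarith, fun δ hδ wδ hwδ x₀ hx₀ w hw' t ht p hp => ?_⟩
  obtain rfl : wδ = tanhProfile ((wp + wm) / 2) ((wp - wm) / 2) δ := funext hwδ
  have hsol : (fun z => w z t) =
      fun z => tanhProfile ((wp + wm) / 2) ((wp - wm) / 2) δ (x₀ z t) :=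
    funext fun z => hw' z t ht.le
  rw [hsol, show wp - wm + 2 = 2 * ((wp - wm) / 2) + 2 by ring]
  exact eLpNorm_iteratedDeriv_two_tanhProfile_comp_le (by linarith) hδ ht.le
    (fun x => hx₀ x t ht.le) hp
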